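/- arXiv:1404.4616 — 2 statements merged into one kernel-verified Lean document; each statement's English description precedes it below -/
import Mathlib

section
/- Let m and n be coprime positive integers. The line from (0,0) to (m,n) passes through the interior of exactly m + n − 1 unit lattice cells of the m × n rectangle. -/
lemma exists_param (m n i j : ℕ) (hm : 0 < m) (hn : 0 < n)
    (him : i < m) (hjn : j < n)
    (h1 : i*n < (j+1)*m) (h2 : j*m < (i+1)*n) :
    ∃ s : ℚ, 0 < s ∧ s < 1 ∧ (i:ℚ) < s*m ∧ s*m < i+1 ∧ (j:ℚ) < s*n ∧ s*n < j+1 := by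
  have hm' : (0:ℚ) < m := by exact_mod_cast hm
  have hn' : (0:ℚ) < n := by exact_mod_cast hn
  have h1' : (i:ℚ)*n < ((j:ℚ)+1)*m := by exact_mod_cast h1
  have h2' : (j:ℚ)*m < ((i:ℚ)+1)*n := by exact_mod_cast h2
  set lo : ℚ := max ((i:ℚ)/m) ((j:ℚ)/n) with hlo
  set hi : ℚ := min (((i:ℚ)+1)/m) (((j:ℚ)+1)/n) with hhi
  have A1 : (i:ℚ)/m < ((i:ℚ)+1)/m := by rw [div_lt_div_iff₀ hm' hm']; nlinarith
  have A2 : (i:ℚ)/m < ((j:ℚ)+1)/n := by rw [div_lt_div_iff₀ hm' hn']; nlinarith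
  have A3 : (j:ℚ)/n < ((i:ℚ)+1)/m := by rw [div_lt_div_iff₀ hn' hm']; nlinarith
  have A4 : (j:ℚ)/n < ((j:ℚ)+1)/n := by rw [div_lt_div_iff₀ hn' hn']; nlinarith
  have hlh : lo < hi := max_lt (lt_min A1 A2) (lt_min A3 A4)
  have e1 : (i:ℚ)/m ≤ lo := le_max_left _ _
  have e2 : (j:ℚ)/n ≤ lo := le_max_right _ _
  have e3 : hi ≤ ((i:ℚ)+1)/m := min_le_left _ _
  have e4 : hi ≤ ((j:ℚ)+1)/n := min_le_right _ _
  have hs1 : lo < (lo+hi)/2 := by linarith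
  have hs2 : (lo+hi)/2 < hi := by linarith
  refine ⟨(lo+hi)/2, ?_, ?_, ?_, ?_, ?_, ?_⟩
  · have : (0:ℚ) ≤ (i:ℚ)/m := div_nonneg (Nat.cast_nonneg i) hm'.le
    linarith
  · have : ((i:ℚ)+1)/m ≤ 1 := by rw [div_le_one hm']; exact_mod_cast him
    linarith
  · have : (i:ℚ)/m < (lo+hi)/2 := by linarith
    rw [div_lt_iff₀ hm'] at this; linarith
  · have : (lo+hi)/2 < ((i:ℚ)+1)/m := by linarith
    rw [lt_div_iff₀ hm'] at this; linarith
  · have : (j:ℚ)/n < (lo+hi)/2 := by linarith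
    rw [div_lt_iff₀ hn'] at this; linarith
  · have : (lo+hi)/2 < ((j:ℚ)+1)/n := by linarith
    rw [lt_div_iff₀ hn'] at this; linarith

lemma param_to_nat (m n i j : ℕ) (hm : 0 < m) (hn : 0 < n)
    (hs : ∃ s : ℚ, 0 < s ∧ s < 1 ∧ (i:ℚ) < s*m ∧ s*m < i+1 ∧ (j:ℚ) < s*n ∧ s*n < j+1) :
    i*n < (j+1)*m ∧ j*m < (i+1)*n := by
  obtain ⟨s, _, _, hi1, hi2, hj1, hj2⟩ := hs
  have hm' : (0:ℚ) < m := by exact_mod_cast hm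
  have hn' : (0:ℚ) < n := by exact_mod_cast hn
  constructor
  · have : (i:ℚ)*n < ((j:ℚ)+1)*m := by nlinarith
    exact_mod_cast this
  · have : (j:ℚ)*m < ((i:ℚ)+1)*n := by nlinarith
    exact_mod_cast this

lemma g_spec (m n k : ℕ) (hm : 0 < m) (hn : 0 < n) (h : Nat.Coprime m n)
    (hk : k < m + n - 1) :
    (k*m + m - 1)/(m+n) ≤ k ∧ (k*m + m - 1)/(m+n) < m ∧ k - (k*m + m - 1)/(m+n) < n ∧
    ((k*m + m - 1)/(m+n))*n < (k - (k*m + m - 1)/(m+n) + 1)*m ∧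
    (k - (k*m + m - 1)/(m+n))*m < ((k*m + m - 1)/(m+n) + 1)*n := by
  have hd : 0 < m + n := by omega
  obtain ⟨i, hi⟩ : ∃ i, (k*m + m - 1)/(m+n) = i := ⟨_, rfl⟩
  rw [hi]
  obtain ⟨r, hr0⟩ : ∃ r, (k*m + m - 1)%(m+n) = r := ⟨_, rfl⟩
  have e : (m+n)*i + r = k*m + m - 1 := by rw [← hi, ← hr0]; exact Nat.div_add_mod _ _
  have hr : r < m+n := by rw [← hr0]; exact Nat.mod_lt _ hd
  clear hi hr0
  have hm1 : 1 ≤ k*m + m := by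
    have : m ≤ k*m + m := Nat.le_add_left _ _
    linarith
  have E : (m+n)*i + r + 1 = k*m + m := by
    calc (m+n)*i + r + 1 = (k*m + m - 1) + 1 := by rw [e]
    _ = k*m + m := Nat.sub_add_cancel hm1
  have hk2 : k + 2 ≤ m + n := by omega
  -- integer versions
  have EZ : ((m:ℤ)+n)*i + r + 1 = k*m + m := by exact_mod_cast E
  have hrZ : (r:ℤ) < m + n := by exact_mod_cast hr
  have hkZ : (k:ℤ) + 2 ≤ m + n := by exact_mod_cast hk2
  have hmZ : (1:ℤ) ≤ m := by exact_mod_cast hm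
  have hnZ : (1:ℤ) ≤ n := by exact_mod_cast hn
  have hrZ0 : (0:ℤ) ≤ r := Int.ofNat_nonneg r
  have hiZ0 : (0:ℤ) ≤ i := Int.ofNat_nonneg i
  have hkZ0 : (0:ℤ) ≤ k := Int.ofNat_nonneg k
  -- i ≤ k
  have hik : i ≤ k := by
    by_contra hc
    push_neg at hc
    have hcZ : (k:ℤ) + 1 ≤ i := by exact_mod_cast hc
    linarith [mul_nonneg (by linarith : (0:ℤ) ≤ (i:ℤ) - k - 1) (by linarith : (0:ℤ) ≤ (m:ℤ)+n),
      mul_nonneg hkZ0 (by linarith : (0:ℤ) ≤ (n:ℤ))]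
  -- i < m
  have him : i < m := by
    by_contra hc
    push_neg at hc
    have hcZ : (m:ℤ) ≤ i := by exact_mod_cast hc
    linarith [mul_nonneg (by linarith : (0:ℤ) ≤ (i:ℤ) - m) (by linarith : (0:ℤ) ≤ (m:ℤ)+n),
      mul_nonneg (by linarith : (0:ℤ) ≤ (m:ℤ)+n-2-k) (by linarith : (0:ℤ) ≤ (m:ℤ))]
  have himZ : (i:ℤ) + 1 ≤ m := by exact_mod_cast him
  -- strict upper bound : k*m < (m+n)*i + n
  have hB : k*m ≤ (m+n)*i + n := by
    have : (k:ℤ)*m ≤ ((m:ℤ)+n)*i + n := by linarith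
    exact_mod_cast this
  have hne : k*m ≠ (m+n)*i + n := by
    intro heq
    have heqZ : (k:ℤ)*m = ((m:ℤ)+n)*i + n := by exact_mod_cast heq
    have hdvd : (m+n) ∣ (k+1)*m := ⟨i+1, by
      have : ((k:ℤ)+1)*m = ((m:ℤ)+n)*(i+1) := by linear_combination heqZ
      exact_mod_cast this⟩
    have hcop : Nat.Coprime (m+n) m := by
      simpa [Nat.coprime_comm] using (Nat.coprime_add_self_right.mpr h.symm)
    have hdk : (m+n) ∣ (k+1) := Nat.Coprime.dvd_of_dvd_mul_right hcop hdvd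
    have := Nat.le_of_dvd (by omega) hdk
    omega
  have hB' : k*m < (m+n)*i + n := lt_of_le_of_ne hB hne
  have hBZ' : (k:ℤ)*m < ((m:ℤ)+n)*i + n := by exact_mod_cast hB'
  obtain ⟨j, hj⟩ : ∃ j, k - i = j := ⟨_, rfl⟩
  rw [hj]
  have hij : i + j = k := by omega
  have hijZ : (i:ℤ) + j = k := by exact_mod_cast hij
  have h3 : ((i:ℤ) + j)*m = (k:ℤ)*m := by rw [hijZ]
  have hjZ0 : (0:ℤ) ≤ j := Int.ofNat_nonneg j
  -- j < n
  have hjn : j < n := by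
    by_contra hc
    push_neg at hc
    have hcZ : (n:ℤ) ≤ j := by exact_mod_cast hc
    linarith [mul_nonneg (by linarith : (0:ℤ) ≤ (j:ℤ) - n) (by linarith : (0:ℤ) ≤ (m:ℤ)),
      mul_nonneg (by linarith : (0:ℤ) ≤ (m:ℤ) - 1 - i) (by linarith : (0:ℤ) ≤ (n:ℤ)), hBZ', h3]
  refine ⟨hik, him, hjn, ?_, ?_⟩
  · have : (i:ℤ)*n < ((j:ℤ)+1)*m := by linarith [EZ, h3, hrZ0]
    exact_mod_cast this
  · have : (j:ℤ)*m < ((i:ℤ)+1)*n := by linarith [hBZ', h3]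
    exact_mod_cast this

/-- For coprime positive integers `m, n`, the open segment from `(0,0)` to `(m,n)`
meets the interior of exactly `m + n - 1` unit lattice cells of the `m × n` rectangle.
The cell `[i,i+1] × [j,j+1]` is cut by the diagonal when some point `(s*m, s*n)` with
`0 < s < 1` lies in its interior. -/
theorem diagonal_cuts_cells (m n : ℕ) (hm : 0 < m) (hn : 0 < n) (h : Nat.Coprime m n) :
    {p : ℕ × ℕ | p.1 < m ∧ p.2 < n ∧
        ∃ s : ℚ, 0 < s ∧ s < 1 ∧
          (p.1 : ℚ) < s * m ∧ s * m < p.1 + 1 ∧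
          (p.2 : ℚ) < s * n ∧ s * n < p.2 + 1}.ncard = m + n - 1 := by
  set g : ℕ → ℕ := fun k => (k*m + m - 1)/(m+n) with hg
  set f : ℕ → ℕ × ℕ := fun k => (g k, k - g k) with hf
  have hset : {p : ℕ × ℕ | p.1 < m ∧ p.2 < n ∧
        ∃ s : ℚ, 0 < s ∧ s < 1 ∧
          (p.1 : ℚ) < s * m ∧ s * m < p.1 + 1 ∧
          (p.2 : ℚ) < s * n ∧ s * n < p.2 + 1}
      = ↑((Finset.range (m+n-1)).image f) := by
    ext ⟨i, j⟩
    simp only [Set.mem_setOf_eq, Finset.coe_image, Set.mem_image, Finset.mem_coe,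
      Finset.mem_range]
    constructor
    · rintro ⟨him, hjn, hs⟩
      obtain ⟨c1, c2⟩ := param_to_nat m n i j hm hn hs
      refine ⟨i + j, by omega, ?_⟩
      have c1Z : (i:ℤ)*n < ((j:ℤ)+1)*m := by exact_mod_cast c1
      have c2Z : (j:ℤ)*m < ((i:ℤ)+1)*n := by exact_mod_cast c2
      have hgij : g (i+j) = i := by
        rw [hg]
        apply Nat.div_eq_of_lt_le
        · apply Nat.le_pred_of_lt
          have : (i:ℤ)*(m+n) < ((i:ℤ)+j)*m + m := by linarith [c1Z]
          exact_mod_cast this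
        · have hlt : (i+j)*m + m - 1 < (i+j)*m + m := by
            have : m ≤ (i+j)*m + m := Nat.le_add_left _ _
            omega
          refine lt_of_lt_of_le hlt ?_
          have : ((i:ℤ)+j)*m + m ≤ ((i:ℤ)+1)*(m+n) := by linarith [c2Z]
          exact_mod_cast this
      simp [hf, hgij]
    · rintro ⟨k, hk, hfk⟩
      obtain ⟨hik, him, hjn, c1, c2⟩ := g_spec m n k hm hn h hk
      injection hfk with h1 h2
      subst h1; subst h2
      exact ⟨him, hjn, exists_param m n _ _ hm hn him hjn c1 c2⟩
  rw [hset, Set.ncard_coe_finset, Finset.card_image_of_injOn, Finset.card_range]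
  intro a ha b hb hab
  simp only [Finset.mem_coe, Finset.mem_range] at ha hb
  obtain ⟨hak, _⟩ := g_spec m n a hm hn h ha
  obtain ⟨hbk, _⟩ := g_spec m n b hm hn h hb
  simp only [hf, hg, Prod.mk.injEq] at hab
  omega
end

section
/- For all n ≥ 1, the complete homogeneous symmetric function satisfies the hook expansion: (qt/(qt−1)) · h_n[((1−qt)/(qt)) x] = −(qt)^{1−n} · Σ_{k=0}^{n−1} (−qt)^k s_{(n−k,1^k)}[x], as an identity of symmetric functions with coefficients in the field ℚ(q,t). -/
open MvPolynomial Finset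

/-- The constant `z_λ = ∏ i^{m_i} · m_i!` attached to a partition. -/
def zPart {n : ℕ} (lam : Nat.Partition n) : ℕ :=
  lam.parts.prod * ∏ i ∈ lam.parts.toFinset, (lam.parts.count i).factorial

/-- The ring of symmetric functions over `K`, modeled as the polynomial ring
`K[p_1, p_2, …]` in the power sums (`X j` stands for `p_j`). -/
noncomputable abbrev SymFn (K : Type*) [CommRing K] := MvPolynomial ℕ K

/-- The complete homogeneous symmetric function
`h_n = ∑_{λ ⊢ n} z_λ⁻¹ p_λ` in the power-sum presentation. -/
noncomputable def hSym (K : Type*) [Field K] [CharZero K] (n : ℕ) : SymFn K :=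
  ∑ lam : Nat.Partition n, ((zPart lam : K))⁻¹ •
    (lam.parts.map fun a => (MvPolynomial.X a : SymFn K)).prod

/-- Extension of `hSym` by zero to negative indices. -/
noncomputable def hSymZ (K : Type*) [Field K] [CharZero K] (r : ℤ) : SymFn K :=
  if r < 0 then 0 else hSym K r.toNat

/-- The Schur function of the hook `(a,1^k)`, via the Jacobi–Trudi determinant. -/
noncomputable def sHook (K : Type*) [Field K] [CharZero K] (a k : ℕ) : SymFn K :=
  Matrix.det (Matrix.of fun i j : Fin (k + 1) =>
    hSymZ K ((if (i : ℕ) = 0 then (a : ℤ) else 1) - (i : ℕ) + (j : ℕ)))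

/-!
Write `u = qt` and, for `c : ℕ → K`, let `h_n[c]` be `h_n` with `p_j` replaced by `c_j p_j`.
Newton's identity says that `H_c(T) = ∑ₙ h_n[c] Tⁿ` solves `T H_c' = (∑_{j ≥ 1} c_j p_j Tʲ) H_c`,
so `H_{c+d} = H_c H_d`; moreover `h_n[(vʲ)ⱼ] = vⁿ h_n` and `H_{-1} = H⁻¹ = ∑ₖ (-1)ᵏ e_k Tᵏ`
with `e_k = s_{(1^k)}`.
Hence `h_n[(u⁻ʲ - 1)ⱼ] = u⁻ⁿ ∑ₖ (-u)ᵏ e_k h_{n-k}`.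
Expanding the Jacobi–Trudi determinant along its first column gives
`s_{(n-k,1^k)} + s_{(n-k-1,1^{k+1})} = e_{k+1} h_{n-k-1}`, so `(1 - u) ∑ₖ (-u)ᵏ s_{(n-k,1^k)}`
telescopes to `∑ₖ (-u)ᵏ e_k h_{n-k}`. At `u = 1` this says `H · ∑ₖ (-1)ᵏ e_k Tᵏ = 1`, which is
the formula for `H_{-1}` used above.
-/

def zMultiset (s : Multiset ℕ) : ℕ := s.prod * ∏ i ∈ s.toFinset, (s.count i).factorial

lemma zMultiset_pos {s : Multiset ℕ} (hs : ∀ i ∈ s, 0 < i) : 0 < zMultiset s :=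
  Nat.mul_pos (Multiset.prod_pos hs) (Finset.prod_pos fun _ _ => Nat.factorial_pos _)

lemma prod_toFinset_factorial_count_cons (a : ℕ) (s : Multiset ℕ) :
    ∏ i ∈ (a ::ₘ s).toFinset, ((a ::ₘ s).count i).factorial
      = (s.count a + 1) * ∏ i ∈ s.toFinset, (s.count i).factorial := by
  have hcount : ∀ i ∈ s.toFinset.erase a, ((a ::ₘ s).count i).factorial = (s.count i).factorial :=
    fun i hi => by rw [Multiset.count_cons_of_ne (Finset.ne_of_mem_erase hi)]
  rw [Multiset.toFinset_cons, ← Finset.mul_prod_erase _ _ (Finset.mem_insert_self a _),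
    Finset.erase_insert_eq_erase, Finset.prod_congr rfl hcount, Multiset.count_cons_self,
    Nat.factorial_succ, mul_assoc]
  by_cases ha : a ∈ s
  · rw [← Finset.mul_prod_erase _ _ (Multiset.mem_toFinset.2 ha)]
  · rw [Finset.erase_eq_of_notMem (by simpa using ha), Multiset.count_eq_zero.2 ha]
    simp

lemma zMultiset_cons (a : ℕ) (s : Multiset ℕ) :
    zMultiset (a ::ₘ s) = a * (s.count a + 1) * zMultiset s := by
  rw [zMultiset, zMultiset, Multiset.prod_cons, prod_toFinset_factorial_count_cons]
  ring

lemma Multiset.sum_toFinset_count_mul (s : Multiset ℕ) :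
    ∑ a ∈ s.toFinset, s.count a * a = s.sum := by
  have h := congrArg Multiset.sum (Multiset.toFinset_sum_count_nsmul_eq s)
  rw [Multiset.sum_sum] at h
  simpa [Multiset.sum_nsmul, smul_eq_mul] using h

namespace Nat.Partition

def cons {n j : ℕ} (hj : 0 < j) (hjn : j ≤ n) (μ : Nat.Partition (n - j)) : Nat.Partition n where
  parts := j ::ₘ μ.parts
  parts_pos hi := (Multiset.mem_cons.1 hi).elim (· ▸ hj) μ.parts_pos
  parts_sum := by rw [Multiset.sum_cons, μ.parts_sum]; omega

def erase {n j : ℕ} (lam : Nat.Partition n) (hj : j ∈ lam.parts) : Nat.Partition (n - j) where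
  parts := lam.parts.erase j
  parts_pos hi := lam.parts_pos (Multiset.mem_of_mem_erase hi)
  parts_sum := by have := Multiset.sum_erase hj; have := lam.parts_sum; omega

end Nat.Partition

section Scaling

variable {K : Type*} [CommRing K]

variable (K) in
noncomputable def pProd (s : Multiset ℕ) : SymFn K :=
  (s.map fun a => (X a : SymFn K)).prod

lemma pProd_cons (a : ℕ) (s : Multiset ℕ) : pProd K (a ::ₘ s) = X a * pProd K s := by
  rw [pProd, Multiset.map_cons, Multiset.prod_cons, pProd]

/-- `f[(a - b) x]` in plethystic notation is `scalePowerSums (fun j => a ^ j - b ^ j) f`. -/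
noncomputable def scalePowerSums (c : ℕ → K) : SymFn K →ₐ[K] SymFn K :=
  aeval fun j => C (c j) * X j

lemma scalePowerSums_X (c : ℕ → K) (j : ℕ) : scalePowerSums c (X j) = c j • X j := by
  rw [scalePowerSums, aeval_X, smul_eq_C_mul]

lemma scalePowerSums_one : scalePowerSums (fun _ => (1 : K)) = AlgHom.id K (SymFn K) := by
  ext j
  simp [scalePowerSums]

lemma scalePowerSums_pow_pProd (v : K) (s : Multiset ℕ) :
    scalePowerSums (v ^ ·) (pProd K s) = v ^ s.sum • pProd K s := by
  induction s using Multiset.induction_on with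
  | empty => simp [pProd]
  | cons a s ih => rw [pProd_cons, map_mul, ih, scalePowerSums_X, Multiset.sum_cons, pow_add,
      smul_mul_smul_comm]

-- `X 0` is not a power sum, so the constant term is `0` rather than `c 0 • X 0`.
noncomputable def pSeries (c : ℕ → K) : PowerSeries (SymFn K) :=
  PowerSeries.mk fun j => if j = 0 then 0 else c j • X j

lemma pSeries_add (c d : ℕ → K) : pSeries (c + d) = pSeries c + pSeries d := by
  ext j
  by_cases hj : j = 0 <;> simp [pSeries, hj, add_smul]

lemma pSeries_zero : pSeries (0 : ℕ → K) = 0 := by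
  ext j
  simp [pSeries]

lemma constantCoeff_pSeries (c : ℕ → K) : PowerSeries.constantCoeff (pSeries c) = 0 := by
  simp [pSeries, ← PowerSeries.coeff_zero_eq_constantCoeff_apply]

end Scaling

section Newton

variable {K : Type*} [Field K] [CharZero K]

lemma hSym_eq_sum_pProd (n : ℕ) :
    hSym K n = ∑ lam : Nat.Partition n, (zMultiset lam.parts : K)⁻¹ • pProd K lam.parts := rfl

@[simp] lemma hSym_zero : hSym K 0 = 1 := by
  simp [hSym_eq_sum_pProd, zMultiset, pProd]

lemma natCast_smul_hSym_eq_sum_count (n : ℕ) :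
    (n : K) • hSym K n = ∑ lam : Nat.Partition n, ∑ j ∈ lam.parts.toFinset,
      ((lam.parts.count j * j : ℕ) / zMultiset lam.parts : K) • pProd K lam.parts := by
  rw [hSym_eq_sum_pProd, Finset.smul_sum]
  refine Finset.sum_congr rfl fun lam _ => ?_
  rw [← Finset.sum_smul, smul_smul, ← Finset.sum_div, ← Nat.cast_sum,
    Multiset.sum_toFinset_count_mul, lam.parts_sum, div_eq_mul_inv]

lemma sum_X_mul_hSym_eq_sum_pProd_cons (n : ℕ) :
    ∑ j ∈ Icc 1 n, X j * hSym K (n - j) = ∑ j ∈ Icc 1 n, ∑ μ : Nat.Partition (n - j),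
      (zMultiset μ.parts : K)⁻¹ • pProd K (j ::ₘ μ.parts) := by
  refine Finset.sum_congr rfl fun j _ => ?_
  simp only [hSym_eq_sum_pProd, Finset.mul_sum, pProd_cons, mul_smul_comm]

lemma count_mul_div_zMultiset_cons {j : ℕ} (hj : 0 < j) {s : Multiset ℕ} (hs : ∀ i ∈ s, 0 < i) :
    (((j ::ₘ s).count j * j : ℕ) / zMultiset (j ::ₘ s) : K) = (zMultiset s : K)⁻¹ := by
  have hz : (zMultiset s : K) ≠ 0 := Nat.cast_ne_zero.2 (zMultiset_pos hs).ne'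
  have hj' : (j : K) ≠ 0 := Nat.cast_ne_zero.2 hj.ne'
  rw [zMultiset_cons, Multiset.count_cons_self]
  push_cast
  field_simp

-- The terms are matched by `(λ, j) ↦ (j, λ with one part j removed)`.
theorem natCast_smul_hSym_eq_sum_X_mul (n : ℕ) :
    (n : K) • hSym K n = ∑ j ∈ Icc 1 n, X j * hSym K (n - j) := by
  rw [natCast_smul_hSym_eq_sum_count, sum_X_mul_hSym_eq_sum_pProd_cons, Finset.sum_sigma',
    Finset.sum_sigma']
  refine Finset.sum_bij'
    (fun x hx => ⟨x.2, x.1.erase (Multiset.mem_toFinset.1 (Finset.mem_sigma.1 hx).2)⟩)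
    (fun y hy => ⟨.cons (Finset.mem_Icc.1 (Finset.mem_sigma.1 hy).1).1
      (Finset.mem_Icc.1 (Finset.mem_sigma.1 hy).1).2 y.2, y.1⟩) ?_ ?_ ?_ ?_ ?_
  · rintro ⟨lam, j⟩ hx
    have hj := Multiset.mem_toFinset.1 (Finset.mem_sigma.1 hx).2
    exact Finset.mem_sigma.2
      ⟨Finset.mem_Icc.2 ⟨lam.parts_pos hj, Nat.Partition.le_of_mem_parts hj⟩, Finset.mem_univ _⟩
  · rintro ⟨j, μ⟩ _
    exact Finset.mem_sigma.2
      ⟨Finset.mem_univ _, Multiset.mem_toFinset.2 (Multiset.mem_cons_self _ _)⟩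
  · rintro ⟨lam, j⟩ hx
    exact congrArg (Sigma.mk · j) (Nat.Partition.ext
      (Multiset.cons_erase (Multiset.mem_toFinset.1 (Finset.mem_sigma.1 hx).2)))
  · rintro ⟨j, μ⟩ _
    exact congrArg (Sigma.mk j) (Nat.Partition.ext (Multiset.erase_cons_head j μ.parts))
  · rintro ⟨lam, j⟩ hx
    have hj := Multiset.mem_toFinset.1 (Finset.mem_sigma.1 hx).2
    show ((lam.parts.count j * j : ℕ) / zMultiset lam.parts : K) • pProd K lam.parts
      = (zMultiset (lam.parts.erase j) : K)⁻¹ • pProd K (j ::ₘ lam.parts.erase j)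
    conv_lhs => rw [← Multiset.cons_erase hj]
    rw [count_mul_div_zMultiset_cons (lam.parts_pos hj)
      fun i hi => lam.parts_pos (Multiset.mem_of_mem_erase hi)]

lemma scalePowerSums_pow_hSym (v : K) (n : ℕ) :
    scalePowerSums (v ^ ·) (hSym K n) = v ^ n • hSym K n := by
  simp only [hSym_eq_sum_pProd, map_sum, map_smul, scalePowerSums_pow_pProd,
    Nat.Partition.parts_sum, Finset.smul_sum, smul_comm (v ^ n)]

end Newton

namespace PowerSeries

variable {R : Type*} [CommRing R]

theorem coeff_X_mul_derivative (f : PowerSeries R) (n : ℕ) :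
    coeff n (X * d⁄dX R f) = n • coeff n f := by
  cases n with
  | zero => simp
  | succ m => rw [coeff_succ_X_mul, coeff_derivative, nsmul_eq_mul, mul_comm]; push_cast; rfl

theorem eq_of_X_mul_derivative_eq_mul [IsAddTorsionFree R] {P f g : PowerSeries R}
    (hP : constantCoeff P = 0) (hf : X * d⁄dX R f = P * f) (hg : X * d⁄dX R g = P * g)
    (h0 : constantCoeff f = constantCoeff g) : f = g := by
  rw [← sub_eq_zero]
  ext n
  induction n using Nat.strong_induction_on with
  | _ n ih =>
    rcases n.eq_zero_or_pos with rfl | hn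
    · simpa [sub_eq_zero] using h0
    simp only [map_zero] at ih ⊢
    refine nsmul_right_injective hn.ne' ?_
    simp only [smul_zero]
    rw [← coeff_X_mul_derivative, map_sub, mul_sub, hf, hg, ← mul_sub, coeff_mul]
    refine Finset.sum_eq_zero fun ⟨i, j⟩ hij => ?_
    rw [Finset.HasAntidiagonal.mem_antidiagonal] at hij
    rcases i.eq_zero_or_pos with rfl | hi
    · rw [coeff_zero_eq_constantCoeff_apply, hP, zero_mul]
    · rw [ih j (by omega), mul_zero]

end PowerSeries

theorem Finset.sum_range_succ_neg_pow_smul_of_eq_add {R M : Type*} [CommRing R]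
    [AddCommGroup M] [Module R M] (u : R) {s t : ℕ → M} {N : ℕ} (h0 : t 0 = s 0)
    (hsucc : ∀ k < N, t (k + 1) = s k + s (k + 1)) :
    ∑ k ∈ range (N + 1), (-u) ^ k • t k
      = (1 - u) • ∑ k ∈ range N, (-u) ^ k • s k + (-u) ^ N • s N := by
  induction N with
  | zero => simp [h0]
  | succ N ih =>
    rw [Finset.sum_range_succ, ih fun k hk => hsucc k (by omega), hsucc N (by omega),
      Finset.sum_range_succ _ N, pow_succ]
    module

section Hooks

variable {K : Type*} [Field K] [CharZero K]

lemma hSymZ_natCast (a : ℕ) : hSymZ K a = hSym K a := by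
  rw [hSymZ, if_neg (by omega), Int.toNat_natCast]

lemma hSymZ_of_neg {r : ℤ} (h : r < 0) : hSymZ K r = 0 := if_pos h

variable (K) in
noncomputable def hookMatrix (a k : ℕ) : Matrix (Fin (k + 1)) (Fin (k + 1)) (SymFn K) :=
  Matrix.of fun i j => hSymZ K ((if (i : ℕ) = 0 then (a : ℤ) else 1) - (i : ℕ) + (j : ℕ))

lemma sHook_eq_det (a k : ℕ) : sHook K a k = (hookMatrix K a k).det := rfl

lemma hookMatrix_submatrix_succ (a k : ℕ) :
    (hookMatrix K a (k + 1)).submatrix Fin.succ Fin.succ = hookMatrix K 1 k := by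
  refine Matrix.ext fun i j => ?_
  simp only [hookMatrix, Matrix.submatrix_apply, Matrix.of_apply, Fin.val_succ,
    Nat.add_one_ne_zero, if_false, Nat.cast_one, ite_self]
  congr 1
  push_cast
  ring

lemma hookMatrix_submatrix_succ_zero_succAbove (a k : ℕ) :
    (hookMatrix K a (k + 1)).submatrix (Fin.succ 0).succAbove Fin.succ
      = hookMatrix K (a + 1) k := by
  refine Matrix.ext fun i j => ?_
  cases i using Fin.cases <;> simp [hookMatrix] <;> congr 1 <;> ring

lemma hookMatrix_zero_zero (a k : ℕ) : hookMatrix K a k 0 0 = hSym K a := by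
  simp [hookMatrix, hSymZ_natCast]

lemma hookMatrix_succ_zero_zero (a k : ℕ) : hookMatrix K a (k + 1) (Fin.succ 0) 0 = 1 := by
  simpa [hookMatrix] using (hSymZ_natCast (K := K) 0).trans hSym_zero

lemma sHook_succ (a k : ℕ) :
    sHook K a (k + 1) = hSym K a * sHook K 1 k - sHook K (a + 1) k := by
  have hrest : ∀ i : Fin k, hookMatrix K a (k + 1) i.succ.succ 0 = 0 := fun i => by
    simp only [hookMatrix, Matrix.of_apply, Fin.val_succ, Fin.val_zero, Nat.add_one_ne_zero,
      if_false]
    exact hSymZ_of_neg (by push_cast; omega)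
  rw [sHook_eq_det, Matrix.det_succ_column_zero, Fin.sum_univ_succ, Fin.sum_univ_succ]
  simp only [hrest, mul_zero, zero_mul, Finset.sum_const_zero, add_zero, Fin.succAbove_zero,
    hookMatrix_submatrix_succ, hookMatrix_submatrix_succ_zero_succAbove]
  rw [hookMatrix_zero_zero, hookMatrix_succ_zero_zero, ← sHook_eq_det, ← sHook_eq_det]
  simp only [Fin.val_zero, Fin.val_succ, pow_zero, zero_add, pow_one]
  ring

variable (K) in
/-- `e_k`, as the column hook `s_{(1, 1^{k-1})}` for `k ≥ 1`. -/
noncomputable def eSym : ℕ → SymFn K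
  | 0 => 1
  | k + 1 => sHook K 1 k

lemma sHook_zero (a : ℕ) : sHook K a 0 = hSym K a := by
  rw [sHook_eq_det, Matrix.det_fin_one, hookMatrix_zero_zero]

lemma sHook_zero_succ (k : ℕ) : sHook K 0 (k + 1) = 0 := by
  rw [sHook_succ, hSym_zero, one_mul, zero_add, sub_self]

/-- Adjacent hooks of `n` add up to `e_{k+1} h_{n-k-1}` (first-column expansion), so the
weighted hook sum telescopes. -/
theorem sum_neg_pow_smul_eSym_mul_hSym {n : ℕ} (hn : 1 ≤ n) (u : K) :
    ∑ k ∈ range (n + 1), (-u) ^ k • (eSym K k * hSym K (n - k))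
      = (1 - u) • ∑ k ∈ range n, (-u) ^ k • sHook K (n - k) k := by
  obtain ⟨m, rfl⟩ : ∃ m, n = m + 1 := ⟨n - 1, by omega⟩
  rw [Finset.sum_range_succ_neg_pow_smul_of_eq_add u (s := fun k => sHook K (m + 1 - k) k),
    Nat.sub_self, sHook_zero_succ, smul_zero, add_zero]
  · rw [eSym, one_mul, Nat.sub_zero, sHook_zero]
  · intro k hk
    obtain ⟨a, ha⟩ : ∃ a, m + 1 - k = a + 1 := ⟨m - k, by omega⟩
    rw [eSym, ha, show m + 1 - (k + 1) = a by omega, sHook_succ, mul_comm]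
    abel

end Hooks

section GeneratingSeries

open scoped PowerSeries

variable {K : Type*} [Field K] [CharZero K]

noncomputable def hSeries (c : ℕ → K) : PowerSeries (SymFn K) :=
  PowerSeries.mk fun n => scalePowerSums c (hSym K n)

lemma constantCoeff_hSeries (c : ℕ → K) : PowerSeries.constantCoeff (hSeries c) = 1 := by
  simp [hSeries, ← PowerSeries.coeff_zero_eq_constantCoeff_apply]

lemma X_mul_derivative_hSeries (c : ℕ → K) :
    PowerSeries.X * d⁄dX _ (hSeries c) = pSeries c * hSeries c := by
  refine PowerSeries.ext fun n => ?_
  rw [PowerSeries.coeff_X_mul_derivative, PowerSeries.coeff_mul,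
    Finset.Nat.sum_antidiagonal_eq_sum_range_succ_mk, Finset.range_eq_Ico,
    Finset.sum_eq_sum_Ico_succ_bot n.succ_pos, Nat.succ_eq_add_one, zero_add,
    Finset.Ico_add_one_right_eq_Icc]
  simp only [hSeries, pSeries, PowerSeries.coeff_mk, if_pos, zero_mul, zero_add]
  rw [← Nat.cast_smul_eq_nsmul K, ← map_smul, natCast_smul_hSym_eq_sum_X_mul, map_sum]
  refine Finset.sum_congr rfl fun j hj => ?_
  rw [if_neg (by have := (Finset.mem_Icc.1 hj).1; omega), map_mul, scalePowerSums_X]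

-- Both sides solve `X f' = (pSeries c + pSeries d) f` with constant term `1`.
theorem hSeries_add (c d : ℕ → K) : hSeries (c + d) = hSeries c * hSeries d := by
  refine PowerSeries.eq_of_X_mul_derivative_eq_mul (constantCoeff_pSeries (c + d))
    (X_mul_derivative_hSeries (c + d)) ?_ (by simp [constantCoeff_hSeries])
  rw [Derivation.leibniz, smul_eq_mul, smul_eq_mul, pSeries_add]
  linear_combination hSeries c * X_mul_derivative_hSeries d +
    hSeries d * X_mul_derivative_hSeries c

theorem hSeries_zero : hSeries (0 : ℕ → K) = 1 := by
  refine PowerSeries.eq_of_X_mul_derivative_eq_mul (constantCoeff_pSeries 0)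
    (X_mul_derivative_hSeries 0) ?_ (by simp [constantCoeff_hSeries])
  simp [pSeries_zero]

theorem mk_hSym_mul_hSeries_neg_one :
    PowerSeries.mk (hSym K) * hSeries (fun _ => -1) = 1 := by
  have hone : hSeries (fun _ => (1 : K)) = PowerSeries.mk (hSym K) := by
    simp [hSeries, scalePowerSums_one]
  rw [← hone, ← hSeries_add, ← hSeries_zero]
  congr 1
  ext j
  simp

theorem mk_neg_one_pow_smul_eSym_mul_mk_hSym :
    PowerSeries.mk (fun k => (-1 : K) ^ k • eSym K k) * PowerSeries.mk (hSym K) = 1 := by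
  refine PowerSeries.ext fun n => ?_
  rw [PowerSeries.coeff_mul, Finset.Nat.sum_antidiagonal_eq_sum_range_succ_mk]
  simp only [PowerSeries.coeff_mk, smul_mul_assoc]
  rcases n.eq_zero_or_pos with rfl | hn
  · simp [eSym]
  · simpa [PowerSeries.coeff_one, hn.ne'] using sum_neg_pow_smul_eSym_mul_hSym hn (1 : K)

theorem hSeries_neg_one :
    hSeries (fun _ => (-1 : K)) = PowerSeries.mk fun k => (-1 : K) ^ k • eSym K k := by
  calc hSeries (fun _ => (-1 : K))
      = (PowerSeries.mk (fun k => (-1 : K) ^ k • eSym K k) * PowerSeries.mk (hSym K)) *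
          hSeries (fun _ => (-1 : K)) := by rw [mk_neg_one_pow_smul_eSym_mul_mk_hSym, one_mul]
    _ = PowerSeries.mk fun k => (-1 : K) ^ k • eSym K k := by
      rw [mul_assoc, mk_hSym_mul_hSeries_neg_one, mul_one]

theorem scalePowerSums_inv_pow_sub_one_hSym {u : K} (hu : u ≠ 0) (n : ℕ) :
    scalePowerSums (fun j => u⁻¹ ^ j - 1) (hSym K n)
      = u⁻¹ ^ n • ∑ k ∈ range (n + 1), (-u) ^ k • (eSym K k * hSym K (n - k)) := by
  have hsplit : (fun j => u⁻¹ ^ j - 1) = (fun _ => (-1 : K)) + (u⁻¹ ^ ·) := by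
    funext j; simp [sub_eq_neg_add]
  calc scalePowerSums (fun j => u⁻¹ ^ j - 1) (hSym K n)
      = PowerSeries.coeff n (hSeries (fun _ => (-1 : K)) * hSeries (u⁻¹ ^ ·)) := by
        rw [← hSeries_add, ← hsplit, hSeries, PowerSeries.coeff_mk]
    _ = ∑ k ∈ range (n + 1), ((-1 : K) ^ k • eSym K k) * (u⁻¹ ^ (n - k) • hSym K (n - k)) := by
        rw [hSeries_neg_one, PowerSeries.coeff_mul,
          Finset.Nat.sum_antidiagonal_eq_sum_range_succ_mk]
        simp only [hSeries, PowerSeries.coeff_mk, scalePowerSums_pow_hSym, Nat.succ_eq_add_one]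
    _ = _ := by
        rw [Finset.smul_sum]
        refine Finset.sum_congr rfl fun k hk => ?_
        rw [smul_mul_assoc, mul_smul_comm, smul_smul, smul_smul, pow_sub₀ _ (inv_ne_zero hu)
          (Nat.lt_succ_iff.1 (Finset.mem_range.1 hk)), inv_pow, inv_pow, inv_inv, neg_pow]
        congr 1
        ring

end GeneratingSeries

/-- Hook expansion of the plethystically modified complete homogeneous symmetric
function (the plethysm `h_n[((1-qt)/(qt))·x]` substitutes `p_j ↦ ((1-(qt)^j)/(qt)^j)·p_j`):
`(qt/(qt-1)) h_n[((1-qt)/(qt)) x] = -(qt)^{1-n} ∑_{k=0}^{n-1} (-qt)^k s_{(n-k,1^k)}`. -/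
theorem hook_expansion (K : Type*) [Field K] [CharZero K] (q t : K)
    (h0 : q * t ≠ 0) (h1 : q * t ≠ 1) (n : ℕ) (hn : 1 ≤ n) :
    (q * t / (q * t - 1)) •
        (MvPolynomial.aeval
          (fun j : ℕ => MvPolynomial.C ((1 - (q * t) ^ j) / (q * t) ^ j) *
            (MvPolynomial.X j : SymFn K)) (hSym K n)) =
      (-((q * t) ^ ((1 : ℤ) - (n : ℤ)))) •
        ∑ k ∈ Finset.range n, (-(q * t)) ^ k • sHook K (n - k) k := by
  set u := q * t
  have hu1 : u - 1 ≠ 0 := sub_ne_zero.2 h1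
  have hscale : (fun j : ℕ => (1 - u ^ j) / u ^ j) = fun j => u⁻¹ ^ j - 1 := by
    funext j
    rw [sub_div, div_self (pow_ne_zero j h0), inv_pow, one_div, sub_eq_neg_add, neg_add_eq_sub]
  change (u / (u - 1)) • scalePowerSums (fun j => (1 - u ^ j) / u ^ j) (hSym K n) = _
  rw [hscale, scalePowerSums_inv_pow_sub_one_hSym h0, sum_neg_pow_smul_eSym_mul_hSym hn, smul_smul,
    smul_smul]
  congr 1
  rw [zpow_sub₀ h0, zpow_one, zpow_natCast, inv_pow]
  field_simp
  ring
end
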